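/- arXiv:1908.01742 — 2 statements merged into one kernel-verified Lean document; each statement's English description precedes it below -/
import Mathlib

section
/- The argument passed to arccos in the spherical angle-recovery formula is always in [−1, 1]: if c is defined from a, b ∈ (0, π) and C via cos c = cos a cos b + sin a sin b cos C with c ∈ (0, π), then |(cos b − cos a cos c)/(sin a sin c)| ≤ 1. -/
open Real

/-- The argument of `arccos` in the spherical angle-recovery formula is always
in `[-1, 1]`: if `a, c ∈ (0, π)`, `b ∈ [0, π]`, `C ∈ [0, π]` satisfy the
spherical law of cosines `cos c = cos a * cos b + sin a * sin b * cos C`, then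
`|(cos b - cos a * cos c) / (sin a * sin c)| ≤ 1`. -/
theorem spherical_angle_recovery_arg_mem
    (a b c C : ℝ) (ha : a ∈ Set.Ioo 0 π) (hc : c ∈ Set.Ioo 0 π)
    (hb : b ∈ Set.Icc 0 π) (hC : C ∈ Set.Icc 0 π)
    (h : Real.cos c = Real.cos a * Real.cos b + Real.sin a * Real.sin b * Real.cos C) :
    |(Real.cos b - Real.cos a * Real.cos c) / (Real.sin a * Real.sin c)| ≤ 1 := by
  have hsa : 0 < Real.sin a := Real.sin_pos_of_pos_of_lt_pi ha.1 ha.2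
  have hsc : 0 < Real.sin c := Real.sin_pos_of_pos_of_lt_pi hc.1 hc.2
  have hx2 : Real.cos C ^ 2 ≤ 1 := by
    nlinarith [Real.neg_one_le_cos C, Real.cos_le_one C]
  have hsc2 : Real.sin c ^ 2 = 1 - (Real.cos a * Real.cos b + Real.sin a * Real.sin b * Real.cos C) ^ 2 := by
    rw [Real.sin_sq, h]
  have pa := Real.sin_sq_add_cos_sq a
  have pb := Real.sin_sq_add_cos_sq b
  have key : (Real.sin a * Real.sin c) ^ 2
      - (Real.cos b - Real.cos a * Real.cos c) ^ 2
      = (Real.sin a * Real.sin b) ^ 2 * (1 - Real.cos C ^ 2) := by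
    rw [h]
    linear_combination (Real.sin a ^ 2) * hsc2
      - ((Real.cos a * Real.cos b + Real.sin a * Real.sin b * Real.cos C) ^ 2
          - Real.cos b ^ 2) * pa
      - Real.sin a ^ 2 * pb
  have hsq : (Real.cos b - Real.cos a * Real.cos c) ^ 2 ≤ (Real.sin a * Real.sin c) ^ 2 := by
    nlinarith [mul_nonneg (sq_nonneg (Real.sin a * Real.sin b)) (sub_nonneg.2 hx2)]
  have hd : 0 < Real.sin a * Real.sin c := mul_pos hsa hsc
  rw [abs_div, abs_of_pos hd, div_le_one hd]
  nlinarith [sq_abs (Real.cos b - Real.cos a * Real.cos c),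
    abs_nonneg (Real.cos b - Real.cos a * Real.cos c), hsq, hd]
end

section
/- The argument passed to arccos in the hyperbolic angle-recovery formula is always in [−1, 1]: if a, b, c > 0 satisfy cosh c = cosh a cosh b − sinh a sinh b cos C for some C ∈ [0, π], then |(cosh a cosh c − cosh b)/(sinh a sinh c)| ≤ 1. -/
open Real

/-- The argument of `arccos` in the hyperbolic angle-recovery formula is always
in `[-1, 1]`: if `a, b, c > 0` and `C ∈ [0, π]` satisfy the hyperbolic law of
cosines `cosh c = cosh a * cosh b - sinh a * sinh b * cos C`, then
`|(cosh a * cosh c - cosh b) / (sinh a * sinh c)| ≤ 1`. -/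
theorem hyperbolic_angle_recovery_arg_mem
    (a b c C : ℝ) (ha : 0 < a) (hb : 0 < b) (hc : 0 < c) (hC : C ∈ Set.Icc 0 π)
    (h : Real.cosh c = Real.cosh a * Real.cosh b -
      Real.sinh a * Real.sinh b * Real.cos C) :
    |(Real.cosh a * Real.cosh c - Real.cosh b) / (Real.sinh a * Real.sinh c)| ≤ 1 := by
  have hsa := Real.sinh_pos_iff.mpr ha
  have hsb := Real.sinh_pos_iff.mpr hb
  have hsc := Real.sinh_pos_iff.mpr hc
  have h1 : Real.cosh a ^ 2 = Real.sinh a ^ 2 + 1 := Real.cosh_sq a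
  have h2 : Real.cosh b ^ 2 = Real.sinh b ^ 2 + 1 := Real.cosh_sq b
  have h3 : Real.cosh c ^ 2 = Real.sinh c ^ 2 + 1 := Real.cosh_sq c
  have hcos : Real.cos C ^ 2 ≤ 1 := Real.cos_sq_le_one C
  have e : (Real.cosh a * Real.cosh c - Real.cosh b) ^ 2 -
      (Real.sinh a * Real.sinh c) ^ 2 =
      Real.sinh a ^ 2 * Real.sinh b ^ 2 * (Real.cos C ^ 2 - 1) := by
    linear_combination (Real.cosh c - Real.cosh a * Real.cosh b -
        Real.sinh a * Real.sinh b * Real.cos C) * h +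
      (Real.cosh c ^ 2 - Real.cosh b ^ 2) * h1 - Real.sinh a ^ 2 * h2 +
      Real.sinh a ^ 2 * h3
  have key : (Real.cosh a * Real.cosh c - Real.cosh b) ^ 2 ≤
      (Real.sinh a * Real.sinh c) ^ 2 := by nlinarith [sq_nonneg (Real.sinh a * Real.sinh b)]
  rw [abs_div, abs_of_pos (mul_pos hsa hsc), div_le_one (mul_pos hsa hsc), abs_le]
  constructor <;> nlinarith [key, mul_pos hsa hsc]
end
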